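/- arXiv:2505.01427 — 2 statements merged into one kernel-verified Lean document; each statement's English description precedes it below -/
import Mathlib

section
/- Let M = [A₁,…,A_k] have rank r and M̃ = [A₁+E₁,…,A_k+E_k]. Then for i = 1,…,r, |σ_i(M̃) − σ_i(M)| ≤ (1/σ_i(M)) · Σ_{j=1}^k (2‖A_j‖₂‖E_j‖₂ + ‖E_j‖₂²). -/
open Matrix Finset

/-- Spectral (ℓ²-operator) norm of a matrix. -/
noncomputable def specNorm {m n : Type*} [Fintype m] [Fintype n] [DecidableEq n]
    (A : Matrix m n ℝ) : ℝ :=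
  ‖LinearMap.toContinuousLinearMap (Matrix.toEuclideanLin A)‖

/-- Eigenvalues of a real symmetric matrix, in nonincreasing order (0-based);
returns 0 if the matrix is not Hermitian. -/
noncomputable def eigDesc {n : ℕ} (A : Matrix (Fin n) (Fin n) ℝ) : Fin n → ℝ :=
  if hA : A.IsHermitian then
    fun i => hA.eigenvalues (Tuple.sort hA.eigenvalues i.rev)
  else fun _ => 0

/-- The `i`-th largest singular value (0-based), defined as the square root of the
`i`-th largest eigenvalue of `Aᵀ * A`; zero for out-of-range indices. -/
noncomputable def sval {m n : ℕ} (A : Matrix (Fin m) (Fin n) ℝ) (i : ℕ) : ℝ :=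
  if h : i < n then Real.sqrt (eigDesc (Aᵀ * A) ⟨i, h⟩) else 0

/-- Horizontal concatenation of `k` matrices of size `m × n`. -/
noncomputable def hconcat {m n k : ℕ} (A : Fin k → Matrix (Fin m) (Fin n) ℝ) :
    Matrix (Fin m) (Fin (k * n)) ℝ :=
  Matrix.of fun i j => A (finProdFinEquiv.symm j).1 i (finProdFinEquiv.symm j).2

/-!
`σ_i(M)²` is the `i`-th eigenvalue of `M Mᵀ = ∑ⱼ Aⱼ Aⱼᵀ`: the spectra of `Mᵀ M` and `M Mᵀ` agree
position by position, because `M` carries a Courant–Fischer subspace of `Mᵀ M` injectively onto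
one of `M Mᵀ`. Weyl's inequality bounds the change of this eigenvalue by
`‖M̃ M̃ᵀ - M Mᵀ‖ ≤ ∑ⱼ (2 ‖Aⱼ‖ ‖Eⱼ‖ + ‖Eⱼ‖²)`, and `|σ̃ - σ| σ ≤ |σ̃² - σ²|` with `σ_i(M) > 0` for
`i < rank M` gives the claim.
-/

open scoped InnerProductSpace Matrix.Norms.L2Operator

section EigenBasis

variable {ι E : Type*} [Fintype ι] [NormedAddCommGroup E] [InnerProductSpace ℝ E]
  (b : OrthonormalBasis ι ℝ E)

theorem OrthonormalBasis.inner_apply_self_eq_sum {T : E →ₗ[ℝ] E} {ev : ι → ℝ}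
    (hT : ∀ j, T (b j) = ev j • b j) (x : E) :
    ⟪x, T x⟫_ℝ = ∑ j, ev j * ⟪b j, x⟫_ℝ ^ 2 := by
  conv_lhs => arg 3; rw [← b.sum_repr' x]
  simp only [map_sum, map_smul, hT, smul_smul, inner_sum, real_inner_smul_right,
    real_inner_comm x]
  exact Finset.sum_congr rfl fun j _ => by ring

theorem OrthonormalBasis.norm_sq_eq_sum (x : E) : ‖x‖ ^ 2 = ∑ j, ⟪b j, x⟫_ℝ ^ 2 := by
  rw [← real_inner_self_eq_norm_sq, ← b.sum_inner_mul_inner]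
  simp only [real_inner_comm x, sq]

theorem OrthonormalBasis.inner_eq_zero_of_mem_span_image {s : Set ι} {x : E}
    (hx : x ∈ Submodule.span ℝ (b '' s)) {l : ι} (hl : l ∉ s) : ⟪b l, x⟫_ℝ = 0 := by
  induction hx using Submodule.span_induction with
  | mem y hy =>
    obtain ⟨j, hj, rfl⟩ := hy
    exact b.orthonormal.2 fun h => hl (h ▸ hj)
  | zero => simp
  | add u v _ _ hu hv => rw [inner_add_right, hu, hv, add_zero]
  | smul a u _ hu => rw [real_inner_smul_right, hu, mul_zero]

theorem OrthonormalBasis.finrank_span_image (s : Finset ι) :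
    Module.finrank ℝ (Submodule.span ℝ (b '' s)) = s.card := by
  rw [Set.image_eq_range, finrank_span_eq_card (b := fun j : (s : Set ι) => b j)
    (b.orthonormal.linearIndependent.comp _ Subtype.val_injective)]
  simp only [SetLike.coe_sort_coe, Fintype.card_coe]

variable {b} {T : E →ₗ[ℝ] E} {ev : ι → ℝ} (hT : ∀ j, T (b j) = ev j • b j) {s : Set ι} {c : ℝ}
  {x : E} (hx : x ∈ Submodule.span ℝ (b '' s))
include hT hx

theorem OrthonormalBasis.mul_norm_sq_le_inner_apply_self (hc : ∀ j ∈ s, c ≤ ev j) :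
    c * ‖x‖ ^ 2 ≤ ⟪x, T x⟫_ℝ := by
  rw [b.inner_apply_self_eq_sum hT, b.norm_sq_eq_sum, Finset.mul_sum]
  refine Finset.sum_le_sum fun j _ => ?_
  by_cases hj : j ∈ s
  · exact mul_le_mul_of_nonneg_right (hc j hj) (sq_nonneg _)
  · simp [b.inner_eq_zero_of_mem_span_image hx hj]

theorem OrthonormalBasis.inner_apply_self_le_mul_norm_sq (hc : ∀ j ∈ s, ev j ≤ c) :
    ⟪x, T x⟫_ℝ ≤ c * ‖x‖ ^ 2 := by
  rw [b.inner_apply_self_eq_sum hT, b.norm_sq_eq_sum, Finset.mul_sum]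
  refine Finset.sum_le_sum fun j _ => ?_
  by_cases hj : j ∈ s
  · exact mul_le_mul_of_nonneg_right (hc j hj) (sq_nonneg _)
  · simp [b.inner_eq_zero_of_mem_span_image hx hj]

end EigenBasis

section CourantFischer

variable {N : ℕ} {S : Matrix (Fin N) (Fin N) ℝ}

noncomputable def descPerm (hS : S.IsHermitian) : Equiv.Perm (Fin N) :=
  Fin.revPerm.trans (Tuple.sort hS.eigenvalues)

theorem eigDesc_eq_eigenvalues_descPerm (hS : S.IsHermitian) (i : Fin N) :
    eigDesc S i = hS.eigenvalues (descPerm hS i) := by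
  rw [eigDesc, dif_pos hS]
  rfl

theorem eigDesc_antitone (hS : S.IsHermitian) : Antitone (eigDesc S) := by
  intro i j hij
  simp only [eigDesc_eq_eigenvalues_descPerm hS, descPerm, Equiv.trans_apply, Fin.revPerm_apply]
  exact Tuple.monotone_sort hS.eigenvalues (Fin.rev_le_rev.mpr hij)

noncomputable def descEigenbasis (hS : S.IsHermitian) :
    OrthonormalBasis (Fin N) ℝ (EuclideanSpace ℝ (Fin N)) :=
  hS.eigenvectorBasis.reindex (descPerm hS).symm

theorem toEuclideanLin_descEigenbasis (hS : S.IsHermitian) (j : Fin N) :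
    toEuclideanLin S (descEigenbasis hS j) = eigDesc S j • descEigenbasis hS j := by
  rw [descEigenbasis, OrthonormalBasis.reindex_apply, Equiv.symm_symm,
    eigDesc_eq_eigenvalues_descPerm hS]
  apply (WithLp.equiv 2 (Fin N → ℝ)).injective
  simpa [toLpLin_apply] using hS.mulVec_eigenvectorBasis (descPerm hS j)

theorem exists_finrank_eq_forall_eigDesc_mul_norm_sq_le (hS : S.IsHermitian) (i : Fin N) :
    ∃ V : Submodule ℝ (EuclideanSpace ℝ (Fin N)), Module.finrank ℝ V = i + 1 ∧
      ∀ x ∈ V, eigDesc S i * ‖x‖ ^ 2 ≤ ⟪x, toEuclideanLin S x⟫_ℝ := by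
  refine ⟨Submodule.span ℝ (descEigenbasis hS '' ↑(Finset.Iic i)), ?_, fun x hx => ?_⟩
  · rw [OrthonormalBasis.finrank_span_image, Fin.card_Iic]
  · refine OrthonormalBasis.mul_norm_sq_le_inner_apply_self (toEuclideanLin_descEigenbasis hS)
      hx fun j hj => eigDesc_antitone hS ?_
    simpa using hj

theorem le_eigDesc_of_forall_mul_norm_sq_le (hS : S.IsHermitian) (i : Fin N)
    {V : Submodule ℝ (EuclideanSpace ℝ (Fin N))} (hV : (i : ℕ) + 1 ≤ Module.finrank ℝ V)
    {c : ℝ} (hc : ∀ x ∈ V, c * ‖x‖ ^ 2 ≤ ⟪x, toEuclideanLin S x⟫_ℝ) :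
    c ≤ eigDesc S i := by
  set W := Submodule.span ℝ (descEigenbasis hS '' ↑(Finset.Ici i))
  have hW : Module.finrank ℝ W = N - i := by
    rw [OrthonormalBasis.finrank_span_image, Fin.card_Ici]
  have hVW : ¬ Disjoint V W := fun h => by
    have := Submodule.finrank_add_finrank_le_of_disjoint h
    rw [finrank_euclideanSpace_fin] at this
    omega
  obtain ⟨x, hxV, hxW, hx0⟩ : ∃ x ∈ V, x ∈ W ∧ x ≠ 0 := by
    simpa [Submodule.disjoint_def] using hVW
  have hupper : ⟪x, toEuclideanLin S x⟫_ℝ ≤ eigDesc S i * ‖x‖ ^ 2 :=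
    OrthonormalBasis.inner_apply_self_le_mul_norm_sq (toEuclideanLin_descEigenbasis hS)
      hxW fun j hj => eigDesc_antitone hS (by simpa using hj)
  have hx : 0 < ‖x‖ ^ 2 := by positivity
  exact le_of_mul_le_mul_right ((hc x hxV).trans hupper) hx

end CourantFischer

section Weyl

variable {N : ℕ}

theorem inner_toEuclideanLin_le_norm_mul_norm_sq (S : Matrix (Fin N) (Fin N) ℝ)
    (x : EuclideanSpace ℝ (Fin N)) : ⟪x, toEuclideanLin S x⟫_ℝ ≤ ‖S‖ * ‖x‖ ^ 2 :=
  calc ⟪x, toEuclideanLin S x⟫_ℝ ≤ ‖x‖ * ‖toEuclideanLin S x‖ := real_inner_le_norm _ _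
    _ ≤ ‖x‖ * (‖S‖ * ‖x‖) := by
      gcongr
      exact (LinearMap.toContinuousLinearMap (toEuclideanLin S)).le_opNorm x
    _ = ‖S‖ * ‖x‖ ^ 2 := by ring

theorem eigDesc_le_eigDesc_add_norm_sub {S T : Matrix (Fin N) (Fin N) ℝ} (hS : S.IsHermitian)
    (hT : T.IsHermitian) (i : Fin N) : eigDesc S i ≤ eigDesc T i + ‖S - T‖ := by
  obtain ⟨V, hV, hSV⟩ := exists_finrank_eq_forall_eigDesc_mul_norm_sq_le hS i
  suffices eigDesc S i - ‖S - T‖ ≤ eigDesc T i by linarith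
  refine le_eigDesc_of_forall_mul_norm_sq_le hT i hV.ge fun x hx => ?_
  have hST : ⟪x, toEuclideanLin S x⟫_ℝ - ⟪x, toEuclideanLin T x⟫_ℝ
      = ⟪x, toEuclideanLin (S - T) x⟫_ℝ := by
    rw [map_sub, LinearMap.sub_apply, inner_sub_right]
  linarith [hSV x hx, inner_toEuclideanLin_le_norm_mul_norm_sq (S - T) x]

theorem abs_eigDesc_sub_eigDesc_le {S T : Matrix (Fin N) (Fin N) ℝ} (hS : S.IsHermitian)
    (hT : T.IsHermitian) (i : Fin N) : |eigDesc S i - eigDesc T i| ≤ ‖S - T‖ := by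
  rw [abs_sub_le_iff]
  constructor
  · linarith [eigDesc_le_eigDesc_add_norm_sub hS hT i]
  · linarith [eigDesc_le_eigDesc_add_norm_sub hT hS i, norm_sub_rev S T]

end Weyl

section Gram

variable {m n : ℕ}

theorem transpose_eq_conjTranspose_real {a b : Type*} (M : Matrix a b ℝ) : Mᵀ = Mᴴ :=
  (conjTranspose_eq_transpose_of_trivial M).symm

theorem isHermitian_transpose_mul_self_real (M : Matrix (Fin m) (Fin n) ℝ) :
    (Mᵀ * M).IsHermitian := by
  rw [transpose_eq_conjTranspose_real]
  exact isHermitian_conjTranspose_mul_self M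

theorem posSemidef_transpose_mul_self_real (M : Matrix (Fin m) (Fin n) ℝ) :
    (Mᵀ * M).PosSemidef := by
  rw [transpose_eq_conjTranspose_real]
  exact posSemidef_conjTranspose_mul_self M

theorem isHermitian_mul_transpose_self_real (M : Matrix (Fin m) (Fin n) ℝ) :
    (M * Mᵀ).IsHermitian := by
  simpa using isHermitian_transpose_mul_self_real Mᵀ

theorem posSemidef_mul_transpose_self_real (M : Matrix (Fin m) (Fin n) ℝ) :
    (M * Mᵀ).PosSemidef := by
  simpa using posSemidef_transpose_mul_self_real Mᵀ

theorem eigDesc_nonneg {S : Matrix (Fin n) (Fin n) ℝ} (hS : S.PosSemidef) (i : Fin n) :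
    0 ≤ eigDesc S i := by
  rw [eigDesc_eq_eigenvalues_descPerm hS.1]
  exact hS.eigenvalues_nonneg _

theorem inner_toEuclideanLin_transpose_mul_self (M : Matrix (Fin m) (Fin n) ℝ)
    (x : EuclideanSpace ℝ (Fin n)) :
    ⟪x, toEuclideanLin (Mᵀ * M) x⟫_ℝ = ‖toEuclideanLin M x‖ ^ 2 := by
  rw [Matrix.toLpLin_mul_same, LinearMap.comp_apply, transpose_eq_conjTranspose_real,
    toEuclideanLin_conjTranspose_eq_adjoint, LinearMap.adjoint_inner_right,
    real_inner_self_eq_norm_sq]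

theorem inner_toEuclideanLin_mul_transpose_self (M : Matrix (Fin m) (Fin n) ℝ)
    (y : EuclideanSpace ℝ (Fin m)) :
    ⟪y, toEuclideanLin (M * Mᵀ) y⟫_ℝ = ‖toEuclideanLin Mᵀ y‖ ^ 2 := by
  simpa using inner_toEuclideanLin_transpose_mul_self Mᵀ y

theorem mul_norm_sq_le_norm_sq_toEuclideanLin_transpose_mul_self (M : Matrix (Fin m) (Fin n) ℝ)
    {μ : ℝ} {x : EuclideanSpace ℝ (Fin n)} (hx : μ * ‖x‖ ^ 2 ≤ ‖toEuclideanLin M x‖ ^ 2) :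
    μ * ‖toEuclideanLin M x‖ ^ 2 ≤ ‖toEuclideanLin (Mᵀ * M) x‖ ^ 2 := by
  rcases eq_or_ne x 0 with rfl | hx0
  · simp
  have hCS : ‖toEuclideanLin M x‖ ^ 2 ≤ ‖x‖ * ‖toEuclideanLin (Mᵀ * M) x‖ := by
    rw [← inner_toEuclideanLin_transpose_mul_self]
    exact real_inner_le_norm _ _
  have hx : 0 < ‖x‖ ^ 2 := by positivity
  refine le_of_mul_le_mul_right ?_ hx
  calc μ * ‖toEuclideanLin M x‖ ^ 2 * ‖x‖ ^ 2
      = μ * ‖x‖ ^ 2 * ‖toEuclideanLin M x‖ ^ 2 := by ring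
    _ ≤ (‖toEuclideanLin M x‖ ^ 2) ^ 2 := by rw [sq (_ ^ 2)]; gcongr
    _ ≤ (‖x‖ * ‖toEuclideanLin (Mᵀ * M) x‖) ^ 2 := by gcongr
    _ = ‖toEuclideanLin (Mᵀ * M) x‖ ^ 2 * ‖x‖ ^ 2 := by ring

theorem eigDesc_transpose_mul_self_le (M : Matrix (Fin m) (Fin n) ℝ) {i : ℕ} (hn : i < n)
    (hm : i < m) : eigDesc (Mᵀ * M) ⟨i, hn⟩ ≤ eigDesc (M * Mᵀ) ⟨i, hm⟩ := by
  set μ := eigDesc (Mᵀ * M) ⟨i, hn⟩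
  rcases le_or_gt μ 0 with hμ | hμ
  · exact hμ.trans (eigDesc_nonneg (posSemidef_mul_transpose_self_real M) _)
  obtain ⟨V, hV, hMV⟩ :=
    exists_finrank_eq_forall_eigDesc_mul_norm_sq_le (isHermitian_transpose_mul_self_real M) ⟨i, hn⟩
  simp only [inner_toEuclideanLin_transpose_mul_self] at hMV
  set f := toEuclideanLin M
  have hinj : Function.Injective (f.domRestrict V) := by
    refine (injective_iff_map_eq_zero _).mpr fun ⟨x, hx⟩ hfx => ?_
    have hfx : f x = 0 := by simpa using hfx
    have hx0 : μ * ‖x‖ ^ 2 ≤ 0 := by simpa [hfx] using hMV x hx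
    ext1
    simpa using nonpos_of_mul_nonpos_right hx0 hμ
  have hfV : Module.finrank ℝ (V.map f) = i + 1 := by
    rw [← LinearMap.range_domRestrict, LinearMap.finrank_range_of_inj hinj, hV]
  refine le_eigDesc_of_forall_mul_norm_sq_le (isHermitian_mul_transpose_self_real M)
    ⟨i, hm⟩ hfV.ge ?_
  rintro _ ⟨x, hx, rfl⟩
  rw [inner_toEuclideanLin_mul_transpose_self, ← LinearMap.comp_apply,
    ← Matrix.toLpLin_mul_same]
  exact mul_norm_sq_le_norm_sq_toEuclideanLin_transpose_mul_self M (hMV x hx)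

theorem eigDesc_transpose_mul_self_eq (M : Matrix (Fin m) (Fin n) ℝ) {i : ℕ} (hn : i < n)
    (hm : i < m) : eigDesc (Mᵀ * M) ⟨i, hn⟩ = eigDesc (M * Mᵀ) ⟨i, hm⟩ := by
  refine (eigDesc_transpose_mul_self_le M hn hm).antisymm ?_
  simpa using eigDesc_transpose_mul_self_le Mᵀ hm hn

theorem card_eigDesc_ne_zero {S : Matrix (Fin n) (Fin n) ℝ} (hS : S.IsHermitian) :
    Fintype.card {j // eigDesc S j ≠ 0} = S.rank := by
  rw [hS.rank_eq_card_non_zero_eigs]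
  exact Fintype.card_congr ((descPerm hS).subtypeEquiv fun j => by
    rw [eigDesc_eq_eigenvalues_descPerm hS])

theorem eigDesc_pos_of_lt_rank {S : Matrix (Fin n) (Fin n) ℝ} (hS : S.PosSemidef) {i : Fin n}
    (hi : (i : ℕ) < S.rank) : 0 < eigDesc S i := by
  refine (eigDesc_nonneg hS i).lt_of_ne fun h => hi.not_ge ?_
  have hsupp : ({j | eigDesc S j ≠ 0} : Finset (Fin n)) ⊆ Finset.Iio i := fun j hj => by
    rw [Finset.mem_Iio]
    by_contra! hij
    exact (Finset.mem_filter.mp hj).2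
      (le_antisymm (h ▸ eigDesc_antitone hS.1 hij) (eigDesc_nonneg hS j))
  rw [← card_eigDesc_ne_zero hS.1, Fintype.card_subtype, ← Fin.card_Iio i]
  exact Finset.card_le_card hsupp

theorem sval_eq_sqrt_eigDesc_mul_transpose (M : Matrix (Fin m) (Fin n) ℝ) {i : ℕ} (hn : i < n)
    (hm : i < m) : sval M i = √(eigDesc (M * Mᵀ) ⟨i, hm⟩) := by
  rw [sval, dif_pos hn, eigDesc_transpose_mul_self_eq M hn hm]

theorem sval_pos_of_lt_rank (M : Matrix (Fin m) (Fin n) ℝ) {i : ℕ} (hi : i < M.rank) :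
    0 < sval M i := by
  have hn : i < n := hi.trans_le M.rank_le_width
  rw [sval, dif_pos hn, Real.sqrt_pos]
  exact eigDesc_pos_of_lt_rank (posSemidef_transpose_mul_self_real M)
    (by rwa [rank_transpose_mul_self])

end Gram

theorem abs_sqrt_sub_sqrt_mul_sqrt_le (a b : ℝ) : |√a - √b| * √b ≤ |a - b| :=
  calc |√a - √b| * √b ≤ |√a - √b| * (√a + √b) := by
        gcongr
        exact le_add_of_nonneg_left (Real.sqrt_nonneg a)
    _ = |√a ^ 2 - √b ^ 2| := by
      rw [← abs_of_nonneg (by positivity : 0 ≤ √a + √b), ← abs_mul]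
      ring_nf
    _ ≤ |a - b| := by
      rw [Real.sq_sqrt', Real.sq_sqrt']
      exact abs_max_sub_max_le_abs a b 0

theorem norm_add_mul_transpose_sub_le {a b : Type*} [Fintype a] [Fintype b] [DecidableEq a]
    [DecidableEq b] (A E : Matrix a b ℝ) :
    ‖(A + E) * (A + E)ᵀ - A * Aᵀ‖ ≤ 2 * ‖A‖ * ‖E‖ + ‖E‖ ^ 2 := by
  have hmul : ∀ X Y : Matrix a b ℝ, ‖X * Yᵀ‖ ≤ ‖X‖ * ‖Y‖ := fun X Y => by
    have := l2_opNorm_mul X Yᵀ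
    rwa [transpose_eq_conjTranspose_real Y, l2_opNorm_conjTranspose] at this
  have hexp : (A + E) * (A + E)ᵀ - A * Aᵀ = A * Eᵀ + E * Aᵀ + E * Eᵀ := by
    simp only [transpose_add, Matrix.add_mul, Matrix.mul_add]
    abel
  calc ‖(A + E) * (A + E)ᵀ - A * Aᵀ‖ ≤ ‖A * Eᵀ‖ + ‖E * Aᵀ‖ + ‖E * Eᵀ‖ := by
        rw [hexp]; exact norm_add₃_le
    _ ≤ ‖A‖ * ‖E‖ + ‖E‖ * ‖A‖ + ‖E‖ * ‖E‖ := by gcongr <;> apply hmul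
    _ = 2 * ‖A‖ * ‖E‖ + ‖E‖ ^ 2 := by ring

theorem hconcat_mul_transpose {m n k : ℕ} (A : Fin k → Matrix (Fin m) (Fin n) ℝ) :
    hconcat A * (hconcat A)ᵀ = ∑ j, A j * (A j)ᵀ := by
  ext a b
  rw [Matrix.sum_apply]
  simp only [mul_apply, hconcat, transpose_apply, of_apply]
  rw [← Fintype.sum_prod_type']
  exact finProdFinEquiv.symm.sum_comp fun p : Fin k × Fin n => A p.1 a p.2 * A p.1 b p.2

theorem stmt7 {m n k : ℕ} (A E : Fin k → Matrix (Fin m) (Fin n) ℝ)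
    (i : ℕ) (hi : i < (hconcat A).rank) :
    |sval (hconcat fun j => A j + E j) i - sval (hconcat A) i|
      ≤ (1 / sval (hconcat A) i)
          * ∑ j, (2 * specNorm (A j) * specNorm (E j) + specNorm (E j) ^ 2) := by
  set M := hconcat A
  set M' := hconcat fun j => A j + E j
  have hn : i < k * n := hi.trans_le M.rank_le_width
  have hm : i < m := hi.trans_le M.rank_le_height
  have hgram : ‖M' * M'ᵀ - M * Mᵀ‖
      ≤ ∑ j, (2 * specNorm (A j) * specNorm (E j) + specNorm (E j) ^ 2) := by
    rw [hconcat_mul_transpose, hconcat_mul_transpose, ← Finset.sum_sub_distrib]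
    exact (norm_sum_le _ _).trans
      (Finset.sum_le_sum fun j _ => norm_add_mul_transpose_sub_le (A j) (E j))
  have hweyl : |sval M' i - sval M i| * sval M i ≤ ‖M' * M'ᵀ - M * Mᵀ‖ := by
    rw [sval_eq_sqrt_eigDesc_mul_transpose M hn hm, sval_eq_sqrt_eigDesc_mul_transpose M' hn hm]
    exact (abs_sqrt_sub_sqrt_mul_sqrt_le _ _).trans <| abs_eigDesc_sub_eigDesc_le
      (isHermitian_mul_transpose_self_real M') (isHermitian_mul_transpose_self_real M) _
  rw [one_div, inv_mul_eq_div, le_div_iff₀ (sval_pos_of_lt_rank M hi)]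
  exact hweyl.trans hgram
end

section
/- The blockwise bound on ‖M̃M̃ᵀ − MMᵀ‖₂, namely Σ_{i=1}^k (2‖A_i‖₂‖E_i‖₂ + ‖E_i‖₂²), is less than or equal to the bound on ‖M̃ᵀM̃ − MᵀM‖₂ given by √(Σ_{i,j} (‖A_i‖₂‖E_j‖₂ + ‖E_i‖₂‖A_j‖₂ + ‖E_i‖₂‖E_j‖₂)²). -/
open Matrix Finset

theorem mul_add_mul_add_mul_sq (a b c d : ℝ) :
    (a * d + c * b + c * d) ^ 2
      = (2 * a * c + c ^ 2) * (2 * b * d + d ^ 2) + (a * d - c * b) ^ 2 := by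
  ring

theorem Finset.sum_le_sqrt_sum_sum_sq {ι : Type*} (s : Finset ι) (x : ι → ℝ)
    (y : ι → ι → ℝ) (hxy : ∀ i ∈ s, ∀ j ∈ s, x i * x j ≤ y i j ^ 2) :
    ∑ i ∈ s, x i ≤ Real.sqrt (∑ i ∈ s, ∑ j ∈ s, y i j ^ 2) := by
  refine (le_abs_self _).trans (Real.abs_le_sqrt ?_)
  rw [sq, sum_mul_sum]
  exact sum_le_sum fun i hi => sum_le_sum fun j hj => hxy i hi j hj

theorem stmt17_general {k : ℕ} (a e : Fin k → ℝ) :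
    ∑ i, (2 * a i * e i + e i ^ 2)
      ≤ Real.sqrt (∑ i, ∑ j, (a i * e j + e i * a j + e i * e j) ^ 2) :=
  Finset.univ.sum_le_sqrt_sum_sum_sq _ _ fun i _ j _ => by
    rw [mul_add_mul_add_mul_sq]
    exact le_add_of_nonneg_right (sq_nonneg _)

theorem stmt17 {k : ℕ} (a e : Fin k → ℝ) (ha : ∀ i, 0 ≤ a i) (he : ∀ i, 0 ≤ e i) :
    ∑ i, (2 * a i * e i + e i ^ 2)
      ≤ Real.sqrt (∑ i, ∑ j, (a i * e j + e i * a j + e i * e j) ^ 2) :=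
  stmt17_general a e
end
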